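/- In the setting of the mean ergodic theorem for a Banach space E with contraction action (α_g)_{g∈G} and Følner averages A_n: if for every ξ ∈ E there exists ξ̄ ∈ E^G lying in the norm-closure of the convex hull of the orbit {α_g ξ : g ∈ G}, then A_n(ξ) converges to ξ̄ in norm for every ξ ∈ E. -/

import Mathlib

/-!
The averages `A_n` are linear contractions, so the vectors `ζ` with `A_n ζ → 0` form a closed
subspace `N`. Replacing `K_n` by its right translate `K_n g` changes `∫_{K_n} α_h ξ dm(h)` by at
most `‖ξ‖ m(K_n ∆ K_n g)`, so the Følner condition gives `α_g ξ - ξ ∈ N`. Since `N` is a closed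
subspace, `η - ξ ∈ N` for every `η` in the closed convex hull of the orbit, in particular for the
fixed point `ξ̄`; as `A_n` fixes `ξ̄`, `A_n ξ = ξ̄ - A_n (ξ̄ - ξ) → ξ̄`.
-/

open MeasureTheory Filter Topology

/-- The Følner ergodic averages `A_n(ξ) = (1/m(K_n)) ∫_{K_n} α_g ξ dm(g)`. -/
noncomputable def ergAvg {E : Type*} [NormedAddCommGroup E] [NormedSpace ℝ E]
    {G : Type*} [MeasurableSpace G] (m : Measure G) (K : ℕ → Set G)
    (α : G → E →L[ℝ] E) (n : ℕ) (ξ : E) : E :=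
  (m (K n)).toReal⁻¹ • ∫ g in K n, α g ξ ∂m

section SetIntegral

variable {G E : Type*} [MeasurableSpace G] [NormedAddCommGroup E] [NormedSpace ℝ E]
  {m : Measure G}

theorem setIntegral_comp_eq_setIntegral_image [MeasurableSpace E] [BorelSpace E] {T : G → G}
    (hT : ∀ B, m (T '' B) = m B) (s : Set G) {f : G → E} (hf : Measurable f)
    (hfT : Measurable (f ∘ T)) :
    ∫ x in s, f (T x) ∂m = ∫ y in T '' s, f y ∂m := by
  -- `T` need not be measurable, but `f ∘ T` on `s` and `f` on `T '' s` have the same law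
  have hdistrib :
      ProbabilityTheory.IdentDistrib (f ∘ T) f (m.restrict s) (m.restrict (T '' s)) := by
    refine ⟨hfT.aemeasurable, hf.aemeasurable, Measure.ext fun S hS => ?_⟩
    rw [Measure.map_apply hfT hS, Measure.map_apply hf hS, Measure.restrict_apply (hfT hS),
      Measure.restrict_apply (hf hS), ← hT, Set.preimage_comp, Set.inter_comm,
      Set.image_inter_preimage, Set.inter_comm]
  exact hdistrib.integral_eq

theorem norm_setIntegral_sub_setIntegral_le {s t : Set G} (hs : MeasurableSet s)
    (hsfin : m s < ⊤) (htfin : m t < ⊤) {f : G → E} (hfs : IntegrableOn f s m)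
    (hft : IntegrableOn f t m) {M : ℝ} (hM : ∀ x, ‖f x‖ ≤ M) :
    ‖∫ x in t, f x ∂m - ∫ x in s, f x ∂m‖ ≤ M * (m (symmDiff s t)).toReal := by
  rcases isEmpty_or_nonempty G with hG | ⟨⟨x₀⟩⟩
  · simp [Set.eq_empty_of_isEmpty]
  -- `t` need not be measurable, so `s` is cut along a measurable hull `t'` of `t`
  set t' := toMeasurable m t
  have hinter : m.restrict (s ∩ t') = m.restrict (t ∩ s) := by
    rw [← Measure.restrict_restrict hs, Measure.restrict_toMeasurable htfin.ne,
      Measure.restrict_restrict hs, Set.inter_comm]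
  have hdiff : ∫ x in t, f x ∂m - ∫ x in s, f x ∂m
      = ∫ x in t \ s, f x ∂m - ∫ x in s \ t', f x ∂m := by
    rw [← integral_inter_add_sdiff hs hft,
      ← integral_inter_add_sdiff (measurableSet_toMeasurable m t) hfs, hinter]
    abel
  have hsymm : m (symmDiff s t) = m (t \ s) + m (s \ t) := by
    rw [← measure_inter_add_sdiff (symmDiff s t) hs, add_comm, Set.symmDiff_def,
      Set.union_inter_distrib_right, Set.union_sdiff_distrib]
    simp [Set.inter_eq_left.2 Set.sdiff_subset]
  have h₁ : m (t \ s) < ⊤ := (measure_mono Set.sdiff_subset).trans_lt htfin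
  have h₂ : m (s \ t) < ⊤ := (measure_mono Set.sdiff_subset).trans_lt hsfin
  have h₃ : m (s \ t') < ⊤ := (measure_mono Set.sdiff_subset).trans_lt hsfin
  have hM₀ : 0 ≤ M := (norm_nonneg _).trans (hM x₀)
  calc ‖∫ x in t, f x ∂m - ∫ x in s, f x ∂m‖
      ≤ ‖∫ x in t \ s, f x ∂m‖ + ‖∫ x in s \ t', f x ∂m‖ := hdiff ▸ norm_sub_le _ _
    _ ≤ M * m.real (t \ s) + M * m.real (s \ t') := by
      gcongr <;> exact norm_setIntegral_le_of_norm_le_const ‹_› fun x _ => hM x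
    _ ≤ M * m.real (t \ s) + M * m.real (s \ t) := by
      gcongr
      · exact h₂.ne
      · exact subset_toMeasurable m t
    _ = M * (m (symmDiff s t)).toReal := by
      rw [hsymm, ENNReal.toReal_add h₁.ne h₂.ne, mul_add, Measure.real, Measure.real]

end SetIntegral

section TendstoZero

variable {ι E : Type*} [NormedAddCommGroup E] [NormedSpace ℝ E]

def tendstoZeroSubmodule (A : ι → E →L[ℝ] E) (l : Filter ι) : Submodule ℝ E where
  carrier := {x | Tendsto (fun i => A i x) l (𝓝 0)}
  add_mem' hx hy := by simpa using hx.add hy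
  zero_mem' := by simpa using tendsto_const_nhds
  smul_mem' c _ hx := by simpa using hx.const_smul c

theorem mem_tendstoZeroSubmodule {A : ι → E →L[ℝ] E} {l : Filter ι} {x : E} :
    x ∈ tendstoZeroSubmodule A l ↔ Tendsto (fun i => A i x) l (𝓝 0) := Iff.rfl

theorem isClosed_tendstoZeroSubmodule {A : ι → E →L[ℝ] E} {C : NNReal}
    (hA : ∀ i, ‖A i‖₊ ≤ C) (l : Filter ι) :
    IsClosed (tendstoZeroSubmodule A l : Set E) := by
  have hequi : Equicontinuous fun i => ⇑(A i) :=
    (LipschitzWith.uniformEquicontinuous _ C fun i =>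
      (A i).lipschitz.weaken (hA i)).equicontinuous
  exact hequi.isClosed_setOfPred_tendsto continuous_const

theorem sub_mem_of_mem_closure_convexHull {S : Submodule ℝ E} (hS : IsClosed (S : Set E))
    {f : ι → E} {ξ : E} (hf : ∀ i, f i - ξ ∈ S) {η : E}
    (hη : η ∈ closure (convexHull ℝ (Set.range f))) : η - ξ ∈ S := by
  let P := AffineSubspace.mk' ξ S
  have hP : IsClosed (P : Set E) :=
    (AffineSubspace.isClosed_direction_iff P).1 (by rwa [AffineSubspace.direction_mk'])
  have hsub : Set.range f ⊆ P := Set.range_subset_iff.2 fun i => AffineSubspace.mem_mk'.2 (hf i)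
  exact AffineSubspace.mem_mk'.1 (closure_minimal (convexHull_min hsub P.convex) hP hη)

end TendstoZero

section ErgodicAverages

variable {E G : Type*} [NormedAddCommGroup E] [NormedSpace ℝ E] [MeasurableSpace G]
  {m : Measure G} {K : ℕ → Set G} {α : G → E →L[ℝ] E}

theorem ergAvg_smul (n : ℕ) (c : ℝ) (ξ : E) :
    ergAvg m K α n (c • ξ) = c • ergAvg m K α n ξ := by
  simp only [ergAvg, map_smul, integral_smul, smul_comm c]

theorem norm_ergAvg_le (hKfin : ∀ n, m (K n) < ⊤) (hcontr : ∀ g, ‖α g‖ ≤ 1) (n : ℕ) (ξ : E) :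
    ‖ergAvg m K α n ξ‖ ≤ ‖ξ‖ := by
  have hint : ‖∫ g in K n, α g ξ ∂m‖ ≤ ‖ξ‖ * m.real (K n) :=
    norm_setIntegral_le_of_norm_le_const (hKfin n) fun g _ =>
      (α g).le_of_opNorm_le (hcontr g) ξ |>.trans_eq (one_mul _)
  rw [ergAvg, norm_smul, Real.norm_of_nonneg (by positivity)]
  calc (m (K n)).toReal⁻¹ * ‖∫ g in K n, α g ξ ∂m‖
      ≤ (m (K n)).toReal⁻¹ * (‖ξ‖ * m.real (K n)) := by gcongr
    _ ≤ ‖ξ‖ := by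
      rw [Measure.real, mul_comm, mul_assoc]
      exact mul_le_of_le_one_right (norm_nonneg ξ) mul_inv_le_one

theorem ergAvg_eq_self [CompleteSpace E] {n : ℕ} (hpos : 0 < m (K n)) (hfin : m (K n) < ⊤)
    {ξ : E} (hξ : ∀ g, α g ξ = ξ) : ergAvg m K α n ξ = ξ := by
  simp only [ergAvg, hξ, setIntegral_const, smul_smul, Measure.real]
  rw [inv_mul_cancel₀ (ENNReal.toReal_ne_zero.2 ⟨hpos.ne', hfin.ne⟩), one_smul]

variable [TopologicalSpace G] [OpensMeasurableSpace G] [SecondCountableTopology G]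

theorem integrableOn_orbit (hcontr : ∀ g, ‖α g‖ ≤ 1) (hcont : ∀ ξ, Continuous fun g => α g ξ)
    {s : Set G} (hs : m s < ⊤) (ξ : E) : IntegrableOn (fun g => α g ξ) s m :=
  .of_bound hs (hcont ξ).aestronglyMeasurable ‖ξ‖ <| ae_of_all _ fun g =>
    (α g).le_of_opNorm_le (hcontr g) ξ |>.trans_eq (one_mul _)

theorem ergAvg_add (hKfin : ∀ n, m (K n) < ⊤) (hcontr : ∀ g, ‖α g‖ ≤ 1)
    (hcont : ∀ ξ, Continuous fun g => α g ξ) (n : ℕ) (ξ η : E) :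
    ergAvg m K α n (ξ + η) = ergAvg m K α n ξ + ergAvg m K α n η := by
  simp only [ergAvg, map_add, ← smul_add]
  rw [integral_add (integrableOn_orbit hcontr hcont (hKfin n) ξ)
    (integrableOn_orbit hcontr hcont (hKfin n) η)]

noncomputable def ergAvgCLM (hKfin : ∀ n, m (K n) < ⊤) (hcontr : ∀ g, ‖α g‖ ≤ 1)
    (hcont : ∀ ξ, Continuous fun g => α g ξ) (n : ℕ) : E →L[ℝ] E :=
  LinearMap.mkContinuous
    { toFun := ergAvg m K α n
      map_add' := ergAvg_add hKfin hcontr hcont n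
      map_smul' := ergAvg_smul n }
    1 fun ξ => (norm_ergAvg_le hKfin hcontr n ξ).trans_eq (one_mul _).symm

theorem ergAvgCLM_apply (hKfin : ∀ n, m (K n) < ⊤) (hcontr : ∀ g, ‖α g‖ ≤ 1)
    (hcont : ∀ ξ, Continuous fun g => α g ξ) (n : ℕ) (ξ : E) :
    ergAvgCLM hKfin hcontr hcont n ξ = ergAvg m K α n ξ := rfl

theorem nnnorm_ergAvgCLM_le (hKfin : ∀ n, m (K n) < ⊤) (hcontr : ∀ g, ‖α g‖ ≤ 1)
    (hcont : ∀ ξ, Continuous fun g => α g ξ) (n : ℕ) :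
    ‖ergAvgCLM hKfin hcontr hcont n‖₊ ≤ 1 :=
  LinearMap.mkContinuous_norm_le _ zero_le_one _

end ErgodicAverages

section Folner

variable {E G : Type*} [NormedAddCommGroup E] [NormedSpace ℝ E] [Semigroup G]
  [TopologicalSpace G] [MeasurableSpace G] [OpensMeasurableSpace G] [SecondCountableTopology G]
  {m : Measure G} {K : ℕ → Set G} {α : G → E →L[ℝ] E}

theorem norm_ergAvg_apply_sub_le (hKmeas : ∀ n, MeasurableSet (K n))
    (hKfin : ∀ n, m (K n) < ⊤) (hcontr : ∀ g, ‖α g‖ ≤ 1)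
    (hcont : ∀ ξ, Continuous fun g => α g ξ) (hact : ∀ g h, (α g).comp (α h) = α (g * h))
    {g : G} (hg : ∀ B : Set G, m ((· * g) '' B) = m B) (n : ℕ) (ξ : E) :
    ‖ergAvg m K α n (α g ξ) - ergAvg m K α n ξ‖
      ≤ ‖ξ‖ * (m (symmDiff (K n) ((· * g) '' K n)) / m (K n)).toReal := by
  -- `E` carries no σ-algebra; the Borel one serves to compare laws in the change of variables
  let := borel E
  have : BorelSpace E := ⟨rfl⟩
  have hcomp : ((fun u => α u ξ) ∘ (· * g)) = fun h => α h (α g ξ) := by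
    funext h
    simp [← hact]
  have hshift : ∫ h in K n, α h (α g ξ) ∂m = ∫ u in (· * g) '' K n, α u ξ ∂m := by
    rw [← setIntegral_comp_eq_setIntegral_image hg (K n) (hcont ξ).measurable
      (hcomp ▸ (hcont (α g ξ)).measurable), ← hcomp]
    rfl
  have himg : m ((· * g) '' K n) < ⊤ := (hg (K n)).trans_lt (hKfin n)
  rw [ergAvg, ergAvg, ← smul_sub, hshift, norm_smul, Real.norm_of_nonneg (by positivity),
    ENNReal.toReal_div]
  calc (m (K n)).toReal⁻¹ * ‖∫ u in (· * g) '' K n, α u ξ ∂m - ∫ u in K n, α u ξ ∂m‖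
      ≤ (m (K n)).toReal⁻¹ * (‖ξ‖ * (m (symmDiff (K n) ((· * g) '' K n))).toReal) := by
        gcongr
        exact norm_setIntegral_sub_setIntegral_le (hKmeas n) (hKfin n) himg
          (integrableOn_orbit hcontr hcont (hKfin n) ξ) (integrableOn_orbit hcontr hcont himg ξ)
          fun u => (α u).le_of_opNorm_le (hcontr u) ξ |>.trans_eq (one_mul _)
    _ = _ := by ring

theorem tendsto_ergAvg_apply_sub (hKmeas : ∀ n, MeasurableSet (K n))
    (hKfin : ∀ n, m (K n) < ⊤) (hcontr : ∀ g, ‖α g‖ ≤ 1)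
    (hcont : ∀ ξ, Continuous fun g => α g ξ) (hact : ∀ g h, (α g).comp (α h) = α (g * h))
    {g : G} (hg : ∀ B : Set G, m ((· * g) '' B) = m B)
    (hFol : Tendsto (fun n => m (symmDiff (K n) ((· * g) '' K n)) / m (K n)) atTop (𝓝 0))
    (ξ : E) :
    Tendsto (fun n => ergAvg m K α n (α g ξ) - ergAvg m K α n ξ) atTop (𝓝 0) := by
  refine squeeze_zero_norm (norm_ergAvg_apply_sub_le hKmeas hKfin hcontr hcont hact hg · ξ) ?_
  simpa using ((ENNReal.tendsto_toReal ENNReal.zero_ne_top).comp hFol).const_mul ‖ξ‖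

end Folner

theorem mean_ergodic_norm_convergence_general
    {E : Type*} [NormedAddCommGroup E] [NormedSpace ℝ E] [CompleteSpace E]
    {G : Type*} [Semigroup G] [TopologicalSpace G]
    [SecondCountableTopology G]
    [MeasurableSpace G] [BorelSpace G]
    (m : Measure G)
    (hminv : ∀ (g : G) (B : Set G), m ((g * ·) '' B) = m B ∧ m ((· * g) '' B) = m B)
    (K : ℕ → Set G) (hKmeas : ∀ n, MeasurableSet (K n))
    (hKpos : ∀ n, 0 < m (K n)) (hKfin : ∀ n, m (K n) < ⊤)
    (hFolR : ∀ g : G,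
      Tendsto (fun n => m (symmDiff (K n) ((· * g) '' K n)) / m (K n)) atTop (nhds 0))
    (α : G → E →L[ℝ] E)
    (hact : ∀ g h : G, (α g).comp (α h) = α (g * h))
    (hcontr : ∀ g : G, ‖α g‖ ≤ 1)
    (hcont : ∀ ξ : E, Continuous fun g => α g ξ)
    (hfix : ∀ ξ : E, ∃ ξ' : E, (∀ g : G, α g ξ' = ξ') ∧
      ξ' ∈ closure (convexHull ℝ (Set.range fun g : G => α g ξ))) :
    ∀ ξ : E, ∃ ξ' : E, (∀ g : G, α g ξ' = ξ') ∧
      ξ' ∈ closure (convexHull ℝ (Set.range fun g : G => α g ξ)) ∧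
      Tendsto (fun n => ergAvg m K α n ξ) atTop (nhds ξ') := by
  intro ξ
  obtain ⟨ξ', hξ'fix, hξ'mem⟩ := hfix ξ
  refine ⟨ξ', hξ'fix, hξ'mem, ?_⟩
  let A := ergAvgCLM hKfin hcontr hcont
  have hnull : ξ' - ξ ∈ tendstoZeroSubmodule A atTop := by
    refine sub_mem_of_mem_closure_convexHull
      (isClosed_tendstoZeroSubmodule (nnnorm_ergAvgCLM_le hKfin hcontr hcont) atTop)
      (fun g => ?_) hξ'mem
    simp only [mem_tendstoZeroSubmodule, map_sub, ergAvgCLM_apply]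
    exact tendsto_ergAvg_apply_sub hKmeas hKfin hcontr hcont hact (fun B => (hminv g B).2)
      (hFolR g) ξ
  have hA : ∀ n, ergAvg m K α n ξ = ξ' - A n (ξ' - ξ) := fun n => by
    rw [map_sub, ergAvgCLM_apply, ergAvgCLM_apply, ergAvg_eq_self (hKpos n) (hKfin n) hξ'fix,
      sub_sub_cancel]
  simpa only [hA, sub_zero] using tendsto_const_nhds.sub hnull

/-- **(4) ⇒ (1) of the mean ergodic theorem.** If for every `ξ` there is a fixed point
`ξ̄` in the norm closure of the convex hull of the orbit `{α_g ξ : g ∈ G}`, then for every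
`ξ` the Følner averages `A_n ξ` converge in norm to such a fixed point `ξ̄`. -/
theorem mean_ergodic_norm_convergence
    {E : Type*} [NormedAddCommGroup E] [NormedSpace ℝ E] [CompleteSpace E]
    {G : Type*} [Semigroup G] [TopologicalSpace G] [T2Space G]
    [SecondCountableTopology G] [LocallyCompactSpace G]
    [MeasurableSpace G] [BorelSpace G]
    (m : Measure G) [SigmaFinite m]
    (hminv : ∀ (g : G) (B : Set G), m ((g * ·) '' B) = m B ∧ m ((· * g) '' B) = m B)
    (K : ℕ → Set G) (hKmeas : ∀ n, MeasurableSet (K n))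
    (hKpos : ∀ n, 0 < m (K n)) (hKfin : ∀ n, m (K n) < ⊤)
    (hFolR : ∀ g : G,
      Tendsto (fun n => m (symmDiff (K n) ((· * g) '' K n)) / m (K n)) atTop (nhds 0))
    (hFolL : ∀ g : G,
      Tendsto (fun n => m (symmDiff (K n) ((g * ·) '' K n)) / m (K n)) atTop (nhds 0))
    (α : G → E →L[ℝ] E)
    (hact : ∀ g h : G, (α g).comp (α h) = α (g * h))
    (hcontr : ∀ g : G, ‖α g‖ ≤ 1)
    (hcont : ∀ ξ : E, Continuous fun g => α g ξ)
    (hfix : ∀ ξ : E, ∃ ξ' : E, (∀ g : G, α g ξ' = ξ') ∧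
      ξ' ∈ closure (convexHull ℝ (Set.range fun g : G => α g ξ))) :
    ∀ ξ : E, ∃ ξ' : E, (∀ g : G, α g ξ' = ξ') ∧
      ξ' ∈ closure (convexHull ℝ (Set.range fun g : G => α g ξ)) ∧
      Tendsto (fun n => ergAvg m K α n ξ) atTop (nhds ξ') :=
  mean_ergodic_norm_convergence_general m hminv K hKmeas hKpos hKfin hFolR α hact hcontr hcont hfix
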